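/- Let G be a symmetric positive semi-definite m×m real matrix, and suppose w₁,…,w_m ∈ ℝ^m satisfy, for each i: wᵢᵀGwᵢ = eᵢᵀGwᵢ (complementary slackness) and Gwᵢ ≥ 0 componentwise. Then for w = (1/m)∑ᵢ wᵢ, we have wᵀGw ≤ 𝟙ᵀGw. -/

import Mathlib

open Matrix Finset

private lemma dp_sum_left {m : ℕ} (f : Fin m → (Fin m → ℝ)) (v : Fin m → ℝ) :
    (∑ i, f i) ⬝ᵥ v = ∑ i, f i ⬝ᵥ v := by
  simp only [dotProduct, Finset.sum_apply, Finset.sum_mul]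
  exact Finset.sum_comm

private lemma dp_sum_right {m : ℕ} (f : Fin m → (Fin m → ℝ)) (v : Fin m → ℝ) :
    v ⬝ᵥ (∑ i, f i) = ∑ i, v ⬝ᵥ f i := by
  simp only [dotProduct, Finset.sum_apply, Finset.mul_sum]
  exact Finset.sum_comm

private lemma mv_sum {m : ℕ} (G : Matrix (Fin m) (Fin m) ℝ) (f : Fin m → (Fin m → ℝ)) :
    G.mulVec (∑ i, f i) = ∑ i, G.mulVec (f i) := by
  ext j
  simp only [Matrix.mulVec, Finset.sum_apply]
  exact dp_sum_right _ _

theorem stmt3 (m : ℕ) (G : Matrix (Fin m) (Fin m) ℝ) (hG : G.PosSemidef)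
    (W : Fin m → (Fin m → ℝ))
    (hcs : ∀ i, W i ⬝ᵥ G.mulVec (W i) = (G.mulVec (W i)) i)
    (hpf : ∀ i j, 0 ≤ (G.mulVec (W i)) j)
    (w : Fin m → ℝ) (hw : w = (m : ℝ)⁻¹ • ∑ i, W i) :
    w ⬝ᵥ G.mulVec w ≤ ∑ j, (G.mulVec w) j := by
  subst hw
  rcases Nat.eq_zero_or_pos m with hm | hm
  · subst hm; simp [dotProduct]
  have hm' : (m : ℝ) ≠ 0 := by positivity
  have key : ∀ x y : Fin m → ℝ,
      x ⬝ᵥ G.mulVec y + y ⬝ᵥ G.mulVec x ≤ x ⬝ᵥ G.mulVec x + y ⬝ᵥ G.mulVec y := by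
    intro x y
    have h := hG.dotProduct_mulVec_nonneg (x - y)
    simp [Matrix.mulVec_sub, sub_dotProduct, dotProduct_sub] at h
    linarith
  have hSle : ∑ i, ∑ j, W i ⬝ᵥ G.mulVec (W j)
      ≤ m * ∑ i, W i ⬝ᵥ G.mulVec (W i) := by
    have hswap : ∑ i, ∑ j, W i ⬝ᵥ G.mulVec (W j)
        = ∑ i, ∑ j, W j ⬝ᵥ G.mulVec (W i) := Finset.sum_comm
    have h2 : (∑ i, ∑ j, W i ⬝ᵥ G.mulVec (W j)) + ∑ i, ∑ j, W i ⬝ᵥ G.mulVec (W j) ≤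
        ∑ i : Fin m, ∑ j : Fin m, (W i ⬝ᵥ G.mulVec (W i) + W j ⬝ᵥ G.mulVec (W j)) := by
      calc (∑ i, ∑ j, W i ⬝ᵥ G.mulVec (W j)) + ∑ i, ∑ j, W i ⬝ᵥ G.mulVec (W j)
          = ∑ i : Fin m, ∑ j : Fin m,
            (W i ⬝ᵥ G.mulVec (W j) + W j ⬝ᵥ G.mulVec (W i)) := by
            nth_rewrite 2 [hswap]
            rw [← Finset.sum_add_distrib]
            exact Finset.sum_congr rfl fun i _ => by rw [← Finset.sum_add_distrib]
        _ ≤ _ := Finset.sum_le_sum fun i _ => Finset.sum_le_sum fun j _ => key _ _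
    have h3 : ∑ i : Fin m, ∑ j : Fin m,
        (W i ⬝ᵥ G.mulVec (W i) + W j ⬝ᵥ G.mulVec (W j))
        = m * ∑ i, W i ⬝ᵥ G.mulVec (W i) + m * ∑ i, W i ⬝ᵥ G.mulVec (W i) := by
      simp [Finset.sum_add_distrib, Finset.mul_sum, mul_comm]
    linarith
  have hLHS : ((m : ℝ)⁻¹ • ∑ i, W i) ⬝ᵥ G.mulVec ((m : ℝ)⁻¹ • ∑ i, W i)
      = (m : ℝ)⁻¹ * ((m : ℝ)⁻¹ * ∑ i, ∑ j, W i ⬝ᵥ G.mulVec (W j)) := by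
    rw [Matrix.mulVec_smul, dotProduct_smul, smul_dotProduct, smul_eq_mul, smul_eq_mul]
    congr 1
    congr 1
    rw [dp_sum_left]
    exact Finset.sum_congr rfl fun i _ => by rw [mv_sum, dp_sum_right]
  have hRHS : ∑ j, (G.mulVec ((m : ℝ)⁻¹ • ∑ i, W i)) j
      = (m : ℝ)⁻¹ * ∑ i, ∑ j, (G.mulVec (W i)) j := by
    rw [Matrix.mulVec_smul, mv_sum]
    simp only [Pi.smul_apply, Finset.sum_apply, smul_eq_mul, Finset.mul_sum]
    rw [Finset.sum_comm]
  rw [hLHS, hRHS]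
  have hdiag : ∑ i, W i ⬝ᵥ G.mulVec (W i) ≤ ∑ i, ∑ j, (G.mulVec (W i)) j := by
    refine Finset.sum_le_sum fun i _ => ?_
    rw [hcs i]
    exact Finset.single_le_sum (fun j _ => hpf i j) (Finset.mem_univ i)
  have hinv : (0:ℝ) < (m : ℝ)⁻¹ := by positivity
  calc (m : ℝ)⁻¹ * ((m : ℝ)⁻¹ * ∑ i, ∑ j, W i ⬝ᵥ G.mulVec (W j))
      ≤ (m : ℝ)⁻¹ * ((m : ℝ)⁻¹ * (m * ∑ i, W i ⬝ᵥ G.mulVec (W i))) :=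
        mul_le_mul_of_nonneg_left (mul_le_mul_of_nonneg_left hSle hinv.le) hinv.le
    _ = (m : ℝ)⁻¹ * ∑ i, W i ⬝ᵥ G.mulVec (W i) := by field_simp
    _ ≤ (m : ℝ)⁻¹ * ∑ i, ∑ j, (G.mulVec (W i)) j :=
        mul_le_mul_of_nonneg_left hdiag hinv.le
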